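/- Let F : C → E be a left covering Pos-enriched functor from a weakly lex category C to a regular category E. If (r₀,r₁) : R ⇉ X is a pseudocongruence in C and ⟨Fr₀,Fr₁⟩ : FR → FX × FX factors as an so-morphism p : FR ↠ S followed by an order-mono ⟨s₀,s₁⟩ : S ↣ FX × FX, then (s₀,s₁) : S ⇉ FX is a congruence in E. -/

import Mathlib

open CategoryTheory

universe w v u v' u' v'' u''

/-- A `Pos`-enriched category: each hom-set carries a partial order and
composition is monotone in both variables. -/
class PosEnriched (C : Type u) [Category.{v} C] where
  homOrder : ∀ X Y : C, PartialOrder (X ⟶ Y)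
  comp_mono : ∀ {X Y Z : C} {f f' : X ⟶ Y} {g g' : Y ⟶ Z},
    (homOrder X Y).le f f' → (homOrder Y Z).le g g' → (homOrder X Z).le (f ≫ g) (f' ≫ g')

attribute [instance] PosEnriched.homOrder

namespace PosEnr

variable {C : Type u} [Category.{v} C] [PosEnriched C]

theorem comp_mono' {X Y Z : C} {f f' : X ⟶ Y} {g g' : Y ⟶ Z} (h : f ≤ f') (h' : g ≤ g') :
    f ≫ g ≤ f' ≫ g' := PosEnriched.comp_mono h h'

/-- `m` is an order-monomorphism (ff-morphism): postcomposition reflects the order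
(hence, by antisymmetry, is also injective). -/
def OrderMono {X Y : C} (m : X ⟶ Y) : Prop :=
  ∀ {Z : C} (u v : Z ⟶ X), u ≫ m ≤ v ≫ m → u ≤ v

/-- `e` is an so-morphism: it is left orthogonal, in the `Pos`-enriched sense, to all
order-monomorphisms (the relevant square of hom-posets is a pullback in `Pos`). -/
def IsSo {A B : C} (e : A ⟶ B) : Prop :=
  ∀ {X Y : C} (m : X ⟶ Y), OrderMono m →
    (∀ (f : A ⟶ X) (g : B ⟶ Y), f ≫ m = e ≫ g → ∃ h : B ⟶ X, e ≫ h = f ∧ h ≫ m = g) ∧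
    (∀ h h' : B ⟶ X, e ≫ h ≤ e ≫ h' → h ≫ m ≤ h' ≫ m → h ≤ h')

/-- `e : I ⟶ X` is the (conical, `Pos`-enriched) inserter of the ordered pair `(f, g)`. -/
def IsInserterP {X Y I : C} (f g : X ⟶ Y) (e : I ⟶ X) : Prop :=
  e ≫ f ≤ e ≫ g ∧
  (∀ {Z : C} (h : Z ⟶ X), h ≫ f ≤ h ≫ g → ∃ u : Z ⟶ I, u ≫ e = h) ∧
  OrderMono e

/-- A weak inserter: only the existence part of the universal property. -/
def IsWeakInserter {X Y I : C} (f g : X ⟶ Y) (e : I ⟶ X) : Prop :=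
  e ≫ f ≤ e ≫ g ∧
  (∀ {Z : C} (h : Z ⟶ X), h ≫ f ≤ h ≫ g → ∃ u : Z ⟶ I, u ≫ e = h)

/-- `q : Y ⟶ Q` is the coinserter of the ordered pair `(u, v)`. -/
def IsCoinserterP {X Y Q : C} (u v : X ⟶ Y) (q : Y ⟶ Q) : Prop :=
  u ≫ q ≤ v ≫ q ∧
  (∀ {Z : C} (h : Y ⟶ Z), u ≫ h ≤ v ≫ h → ∃ t : Q ⟶ Z, q ≫ t = h) ∧
  (∀ {Z : C} (h h' : Q ⟶ Z), q ≫ h ≤ q ≫ h' → h ≤ h')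

/-- `(c0, c1)` is the comma object (lax pullback) of the ordered pair `(f, g)`. -/
def IsCommaP {X Y Z P : C} (f : X ⟶ Z) (g : Y ⟶ Z) (c0 : P ⟶ X) (c1 : P ⟶ Y) : Prop :=
  c0 ≫ f ≤ c1 ≫ g ∧
  (∀ {A : C} (u0 : A ⟶ X) (u1 : A ⟶ Y), u0 ≫ f ≤ u1 ≫ g →
      ∃ w : A ⟶ P, w ≫ c0 = u0 ∧ w ≫ c1 = u1) ∧
  (∀ {A : C} (w w' : A ⟶ P), w ≫ c0 ≤ w' ≫ c0 → w ≫ c1 ≤ w' ≫ c1 → w ≤ w')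

/-- An effective epimorphism: a coinserter of some pair. -/
def EffectiveEpiP {Y Q : C} (q : Y ⟶ Q) : Prop :=
  ∃ (X : C) (u v : X ⟶ Y), IsCoinserterP u v q

/-- Binary product in the `Pos`-enriched (conical) sense. -/
def IsBinProdP {X Y P : C} (p : P ⟶ X) (q : P ⟶ Y) : Prop :=
  (∀ {Z : C} (f : Z ⟶ X) (g : Z ⟶ Y), ∃ h : Z ⟶ P, h ≫ p = f ∧ h ≫ q = g) ∧
  (∀ {Z : C} (h h' : Z ⟶ P), h ≫ p ≤ h' ≫ p → h ≫ q ≤ h' ≫ q → h ≤ h')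

/-- Terminal object in the `Pos`-enriched sense. -/
def IsTerminalP (T : C) : Prop :=
  ∀ X : C, ∃ f : X ⟶ T, ∀ g : X ⟶ T, g = f

/-- Product of a (possibly infinite) family in the `Pos`-enriched sense. -/
def IsProdFamP {ι : Type w} (X : ι → C) (P : C) (p : ∀ i, P ⟶ X i) : Prop :=
  (∀ {Z : C} (f : ∀ i, Z ⟶ X i), ∃ h : Z ⟶ P, ∀ i, h ≫ p i = f i) ∧
  (∀ {Z : C} (h h' : Z ⟶ P), (∀ i, h ≫ p i ≤ h' ≫ p i) → h ≤ h')

/-- Weak product of a family: only the existence part. -/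
def IsWeakProdFam {ι : Type w} (X : ι → C) (P : C) (p : ∀ i, P ⟶ X i) : Prop :=
  ∀ {Z : C} (f : ∀ i, Z ⟶ X i), ∃ h : Z ⟶ P, ∀ i, h ≫ p i = f i

/-- Pullback in the `Pos`-enriched (conical) sense. -/
def IsPullbackP {X Y Z P : C} (f : X ⟶ Z) (g : Y ⟶ Z) (p0 : P ⟶ X) (p1 : P ⟶ Y) : Prop :=
  p0 ≫ f = p1 ≫ g ∧
  (∀ {A : C} (u0 : A ⟶ X) (u1 : A ⟶ Y), u0 ≫ f = u1 ≫ g →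
      ∃ w : A ⟶ P, w ≫ p0 = u0 ∧ w ≫ p1 = u1) ∧
  (∀ {A : C} (w w' : A ⟶ P), w ≫ p0 ≤ w' ≫ p0 → w ≫ p1 ≤ w' ≫ p1 → w ≤ w')

/-- A congruence, given by a jointly order-monic pair which is order-reflexive and
transitive (in terms of generalized elements). -/
def IsCongPair {S X : C} (s0 s1 : S ⟶ X) : Prop :=
  (∀ {A : C} (u v : A ⟶ S), u ≫ s0 ≤ v ≫ s0 → u ≫ s1 ≤ v ≫ s1 → u ≤ v) ∧
  (∀ {A : C} (a0 a1 : A ⟶ X), a0 ≤ a1 → ∃ u : A ⟶ S, u ≫ s0 = a0 ∧ u ≫ s1 = a1) ∧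
  (∀ {A : C} (u v : A ⟶ S), u ≫ s1 = v ≫ s0 →
      ∃ t : A ⟶ S, t ≫ s0 = u ≫ s0 ∧ t ≫ s1 = v ≫ s1)

/-- An so-projective object: its covariant hom-functor to `Pos` preserves so-morphisms
(equivalently, sends them to surjections). -/
def SoProjective (P : C) : Prop :=
  ∀ {A B : C} (e : A ⟶ B), IsSo e → ∀ f : P ⟶ B, ∃ g : P ⟶ A, g ≫ e = f

end PosEnr

/-- A weight `W : D ⥤ Pos` for `Pos`-enriched weighted limits, given concretely. -/
structure PosWeight (D : Type u') [Category.{v'} D] [PosEnriched D] where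
  obj : D → Type
  po : ∀ d, PartialOrder (obj d)
  map : ∀ {d d' : D}, (d ⟶ d') → obj d → obj d'
  map_monotone : ∀ {d d' : D} (f : d ⟶ d') (x y : obj d),
    (po d).le x y → (po d').le (map f x) (map f y)
  map_id : ∀ (d : D) (x : obj d), map (𝟙 d) x = x
  map_comp : ∀ {d d' d'' : D} (f : d ⟶ d') (g : d' ⟶ d'') (x : obj d),
    map (f ≫ g) x = map g (map f x)
  map_le : ∀ {d d' : D} {f g : d ⟶ d'}, f ≤ g → ∀ x : obj d, (po d').le (map f x) (map g x)

attribute [instance] PosWeight.po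

/-- A finite weight: finitely many objects, finite hom-posets, finite values. -/
def PosWeight.IsFiniteWeight {D : Type u'} [Category.{v'} D] [PosEnriched D]
    (W : PosWeight D) : Prop :=
  Finite D ∧ (∀ d d' : D, Finite (d ⟶ d')) ∧ ∀ d, Finite (W.obj d)

/-- A `Pos`-enriched (locally monotone) functor. -/
structure PosFunctor (C : Type u) (E : Type u') [Category.{v} C] [Category.{v'} E]
    [PosEnriched C] [PosEnriched E] where
  toFunctor : C ⥤ E
  map_le : ∀ {X Y : C} {f g : X ⟶ Y}, f ≤ g → toFunctor.map f ≤ toFunctor.map g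

/-- Composition of `Pos`-enriched functors. -/
def PosFunctor.comp {D : Type u''} {C : Type u} {E : Type u'}
    [Category.{v''} D] [Category.{v} C] [Category.{v'} E]
    [PosEnriched D] [PosEnriched C] [PosEnriched E]
    (G : PosFunctor D C) (F : PosFunctor C E) : PosFunctor D E where
  toFunctor := G.toFunctor ⋙ F.toFunctor
  map_le h := F.map_le (G.map_le h)

/-- A cylinder (`Pos`-natural transformation) `W ⟶ C(L, F-)`. -/
structure Cylinder {D : Type u'} [Category.{v'} D] [PosEnriched D] (W : PosWeight D)
    {E : Type u} [Category.{v} E] [PosEnriched E] (F : PosFunctor D E) (L : E) where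
  app : ∀ d : D, W.obj d → (L ⟶ F.toFunctor.obj d)
  monotone : ∀ (d : D) (x y : W.obj d), (W.po d).le x y → app d x ≤ app d y
  naturality : ∀ {d d' : D} (f : d ⟶ d') (x : W.obj d),
    app d x ≫ F.toFunctor.map f = app d' (W.map f x)

/-- The image of a cylinder under a `Pos`-enriched functor. -/
def Cylinder.mapF {D : Type u''} {C : Type u} {E : Type u'}
    [Category.{v''} D] [Category.{v} C] [Category.{v'} E]
    [PosEnriched D] [PosEnriched C] [PosEnriched E]
    {W : PosWeight D} {G : PosFunctor D C} {L : C}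
    (F : PosFunctor C E) (c : Cylinder W G L) :
    Cylinder W (G.comp F) (F.toFunctor.obj L) where
  app d x := F.toFunctor.map (c.app d x)
  monotone d x y h := F.map_le (c.monotone d x y h)
  naturality f x := by
    show F.toFunctor.map _ ≫ F.toFunctor.map _ = _
    rw [← F.toFunctor.map_comp, c.naturality]

/-- `L` with cylinder `c` is a weak `W`-weighted limit of `F`:
the induced comparison maps on hom-posets are surjective. -/
def IsWeakWeightedLimitP {D : Type u'} [Category.{v'} D] [PosEnriched D] (W : PosWeight D)
    {E : Type u} [Category.{v} E] [PosEnriched E] (F : PosFunctor D E)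
    (L : E) (c : Cylinder W F L) : Prop :=
  ∀ (Z : E) (φ : Cylinder W F Z), ∃ h : Z ⟶ L, ∀ (d : D) (x : W.obj d),
    h ≫ c.app d x = φ.app d x

/-- `L` with cylinder `c` is a (strong) `W`-weighted limit of `F`. -/
def IsWeightedLimitP {D : Type u'} [Category.{v'} D] [PosEnriched D] (W : PosWeight D)
    {E : Type u} [Category.{v} E] [PosEnriched E] (F : PosFunctor D E)
    (L : E) (c : Cylinder W F L) : Prop :=
  IsWeakWeightedLimitP W F L c ∧
  ∀ (Z : E) (h h' : Z ⟶ L), (∀ (d : D) (x : W.obj d), h ≫ c.app d x ≤ h' ≫ c.app d x) → h ≤ h'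

/-- A weakly lex `Pos`-category: all weak finite weighted limits exist. -/
def WeaklyLex (C : Type u) [Category.{v} C] [PosEnriched C] : Prop :=
  ∀ (D : Type) [SmallCategory D] [PosEnriched D] (W : PosWeight D) (F : PosFunctor D C),
    W.IsFiniteWeight → ∃ (L : C) (c : Cylinder W F L), IsWeakWeightedLimitP W F L c

/-- All finite weighted limits exist (in the strong sense). -/
def HasFiniteWeightedLimitsP (C : Type u) [Category.{v} C] [PosEnriched C] : Prop :=
  ∀ (D : Type) [SmallCategory D] [PosEnriched D] (W : PosWeight D) (F : PosFunctor D C),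
    W.IsFiniteWeight → ∃ (L : C) (c : Cylinder W F L), IsWeightedLimitP W F L c

open PosEnr

/-- A regular `Pos`-enriched category. -/
def IsRegularCat (C : Type u) [Category.{v} C] [PosEnriched C] : Prop :=
  HasFiniteWeightedLimitsP C ∧
  (∀ {X Y : C} (f : X ⟶ Y), ∃ (I : C) (e : X ⟶ I) (m : I ⟶ Y),
      IsSo e ∧ OrderMono m ∧ e ≫ m = f) ∧
  (∀ {X Y Z P : C} (f : X ⟶ Z) (g : Y ⟶ Z) (p0 : P ⟶ X) (p1 : P ⟶ Y),
      IsPullbackP f g p0 p1 → IsSo f → IsSo p1)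

/-- An exact `Pos`-enriched category: regular, and every congruence is effective,
i.e. is the kernel congruence (comma object `q/q`) of some morphism. -/
def IsExactCat (C : Type u) [Category.{v} C] [PosEnriched C] : Prop :=
  IsRegularCat C ∧
  ∀ {S X : C} (s0 s1 : S ⟶ X), IsCongPair s0 s1 →
    ∃ (Q : C) (q : X ⟶ Q), IsCommaP q q s0 s1

/-- Fully order-faithful: full and order-reflecting (hence faithful) on hom-posets. -/
def FullyOrderFaithful {C : Type u} {E : Type u'} [Category.{v} C] [Category.{v'} E]
    [PosEnriched C] [PosEnriched E] (F : PosFunctor C E) : Prop :=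
  (∀ {X Y : C} (g : F.toFunctor.obj X ⟶ F.toFunctor.obj Y), ∃ f : X ⟶ Y, F.toFunctor.map f = g) ∧
  (∀ {X Y : C} (f g : X ⟶ Y), F.toFunctor.map f ≤ F.toFunctor.map g → f ≤ g)

/-- An equivalence of `Pos`-enriched categories. -/
def IsEquivP {C : Type u} {E : Type u'} [Category.{v} C] [Category.{v'} E]
    [PosEnriched C] [PosEnriched E] (F : PosFunctor C E) : Prop :=
  FullyOrderFaithful F ∧ ∀ Y : E, ∃ X : C, Nonempty (F.toFunctor.obj X ≅ Y)

/-- Preservation of all finite weighted limits by a `Pos`-enriched functor. -/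
def PreservesFiniteWeightedLimitsP {C : Type u} {E : Type u'} [Category.{v} C] [Category.{v'} E]
    [PosEnriched C] [PosEnriched E] (F : PosFunctor C E) : Prop :=
  ∀ (D : Type) [SmallCategory D] [PosEnriched D] (W : PosWeight D), W.IsFiniteWeight →
    ∀ (G : PosFunctor D C) (L : C) (c : Cylinder W G L),
      IsWeightedLimitP W G L c →
      IsWeightedLimitP W (G.comp F) (F.toFunctor.obj L) (c.mapF F)

/-- A regular `Pos`-enriched functor: preserves finite weighted limits and effective
epimorphisms. -/
def IsRegularFunctor {C : Type u} {E : Type u'} [Category.{v} C] [Category.{v'} E]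
    [PosEnriched C] [PosEnriched E] (F : PosFunctor C E) : Prop :=
  PreservesFiniteWeightedLimitsP F ∧
  ∀ {X Y : C} (e : X ⟶ Y), EffectiveEpiP e → EffectiveEpiP (F.toFunctor.map e)

/-- A left covering functor: for every weak finite weighted limit in the domain, any
comparison morphism into the corresponding (strong) limit in the codomain is an
effective epimorphism. -/
def LeftCovering {C : Type u} {E : Type u'} [Category.{v} C] [Category.{v'} E]
    [PosEnriched C] [PosEnriched E] (F : PosFunctor C E) : Prop :=
  ∀ (D : Type) [SmallCategory D] [PosEnriched D] (W : PosWeight D), W.IsFiniteWeight →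
    ∀ (G : PosFunctor D C) (L : C) (c : Cylinder W G L), IsWeakWeightedLimitP W G L c →
    ∀ (L' : E) (c' : Cylinder W (G.comp F) L'), IsWeightedLimitP W (G.comp F) L' c' →
    ∀ h : F.toFunctor.obj L ⟶ L', (∀ (d : D) (x : W.obj d),
        h ≫ c'.app d x = F.toFunctor.map (c.app d x)) →
      EffectiveEpiP h

/-- The full subcategory of a `Pos`-enriched category is `Pos`-enriched. -/
instance fullSubPosEnriched {C : Type u} [Category.{v} C] [PosEnriched C] (Z : C → Prop) :
    PosEnriched (ObjectProperty.FullSubcategory Z) where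
  homOrder X Y := PartialOrder.lift (fun f => f.hom) (fun _ _ h => InducedCategory.hom_ext h)
  comp_mono h h' := PosEnriched.comp_mono h h'

/-! ## The exact completion -/

open PosEnr

/-- A pseudocongruence in a `Pos`-enriched category: an order-reflexive and transitive
parallel pair. These are the objects of the exact completion. -/
structure ExObj (C : Type u) [Category.{v} C] [PosEnriched C] where
  X : C
  R : C
  r0 : R ⟶ X
  r1 : R ⟶ X
  orefl : ∀ {A : C} (a0 a1 : A ⟶ X), a0 ≤ a1 → ∃ u : A ⟶ R, u ≫ r0 = a0 ∧ u ≫ r1 = a1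
  tra : ∀ {A : C} (u v : A ⟶ R), u ≫ r1 = v ≫ r0 →
    ∃ t : A ⟶ R, t ≫ r0 = u ≫ r0 ∧ t ≫ r1 = v ≫ r1

namespace ExObj

variable {C : Type u} [Category.{v} C] [PosEnriched C]

/-- `f : X ⟶ Y` is compatible from `(X,R)` to `(Y,S)`. -/
def Compat (A B : ExObj C) (f : A.X ⟶ B.X) : Prop :=
  ∃ fb : A.R ⟶ B.R, fb ≫ B.r0 = A.r0 ≫ f ∧ fb ≫ B.r1 = A.r1 ≫ f

/-- The preorder `f ≼ g` on compatible morphisms, given by factoring `(f,g)` through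
the codomain pseudocongruence. -/
def Pre (A B : ExObj C) (f g : A.X ⟶ B.X) : Prop :=
  ∃ s : A.X ⟶ B.R, s ≫ B.r0 = f ∧ s ≫ B.r1 = g

theorem Pre.refl (A B : ExObj C) (f : A.X ⟶ B.X) : Pre A B f f := by
  obtain ⟨u, h0, h1⟩ := B.orefl f f le_rfl
  exact ⟨u, h0, h1⟩

theorem Pre.trans' {A B : ExObj C} {f g h : A.X ⟶ B.X}
    (h1 : Pre A B f g) (h2 : Pre A B g h) : Pre A B f h := by
  obtain ⟨s, hs0, hs1⟩ := h1
  obtain ⟨t, ht0, ht1⟩ := h2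
  obtain ⟨w, hw0, hw1⟩ := B.tra s t (by rw [hs1, ht0])
  exact ⟨w, by rw [hw0, hs0], by rw [hw1, ht1]⟩

theorem Compat.comp {A B D : ExObj C} {f : A.X ⟶ B.X} {g : B.X ⟶ D.X}
    (hf : Compat A B f) (hg : Compat B D g) : Compat A D (f ≫ g) := by
  obtain ⟨fb, h0, h1⟩ := hf
  obtain ⟨gb, k0, k1⟩ := hg
  refine ⟨fb ≫ gb, ?_, ?_⟩
  · rw [Category.assoc, k0, ← Category.assoc, h0, Category.assoc]
  · rw [Category.assoc, k1, ← Category.assoc, h1, Category.assoc]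

theorem Pre.comp_left {A B D : ExObj C} {f f' : A.X ⟶ B.X} (g : B.X ⟶ D.X)
    (hg : Compat B D g) (h : Pre A B f f') : Pre A D (f ≫ g) (f' ≫ g) := by
  obtain ⟨s, hs0, hs1⟩ := h
  obtain ⟨gb, k0, k1⟩ := hg
  refine ⟨s ≫ gb, ?_, ?_⟩
  · rw [Category.assoc, k0, ← Category.assoc, hs0]
  · rw [Category.assoc, k1, ← Category.assoc, hs1]

theorem Pre.comp_right {A B D : ExObj C} (f : A.X ⟶ B.X) {g g' : B.X ⟶ D.X}
    (h : Pre B D g g') : Pre A D (f ≫ g) (f ≫ g') := by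
  obtain ⟨s, hs0, hs1⟩ := h
  exact ⟨f ≫ s, by rw [Category.assoc, hs0], by rw [Category.assoc, hs1]⟩

theorem Pre.compCongr {A B D : ExObj C} {f f' : A.X ⟶ B.X} {g g' : B.X ⟶ D.X}
    (hg : Compat B D g) (h1 : Pre A B f f') (h2 : Pre B D g g') :
    Pre A D (f ≫ g) (f' ≫ g') :=
  (Pre.comp_left g hg h1).trans' (Pre.comp_right f' h2)

/-- The equivalence relation on compatible morphisms. -/
def exSetoid (A B : ExObj C) : Setoid {f : A.X ⟶ B.X // Compat A B f} where
  r f g := Pre A B f.1 g.1 ∧ Pre A B g.1 f.1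
  iseqv := ⟨fun f => ⟨Pre.refl A B f.1, Pre.refl A B f.1⟩, fun h => ⟨h.2, h.1⟩,
    fun h1 h2 => ⟨h1.1.trans' h2.1, h2.2.trans' h1.2⟩⟩

/-- The exact completion `C_ex` as a category: objects are pseudocongruences, morphisms
are equivalence classes of compatible morphisms. -/
instance exCategory : Category (ExObj C) where
  Hom A B := Quotient (exSetoid A B)
  id A := Quotient.mk _ ⟨𝟙 A.X, ⟨𝟙 A.R, by simp, by simp⟩⟩
  comp {A B D} f g :=
    Quotient.liftOn₂ f g (fun f g => Quotient.mk _ ⟨f.1 ≫ g.1, f.2.comp g.2⟩)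
      (fun a b a' b' ha hb => Quotient.sound
        ⟨Pre.compCongr b.2 ha.1 hb.1, Pre.compCongr b'.2 ha.2 hb.2⟩)
  id_comp {A B} f := Quotient.inductionOn f fun f => Quotient.sound (by
    constructor <;> · simp only [Category.id_comp]; exact Pre.refl A B f.1)
  comp_id {A B} f := Quotient.inductionOn f fun f => Quotient.sound (by
    constructor <;> · simp only [Category.comp_id]; exact Pre.refl A B f.1)
  assoc {A B D E} f g h := Quotient.inductionOn₃ f g h fun f g h => Quotient.sound (by
    constructor <;> · simp only [Category.assoc]; exact Pre.refl A E _)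

/-- The `Pos`-enrichment of the exact completion. -/
instance exPosEnriched : PosEnriched (ExObj C) where
  homOrder A B :=
    { le := fun f g => Quotient.liftOn₂ f g (fun f g => Pre A B f.1 g.1)
        (fun a b a' b' ha hb => propext
          ⟨fun h => (ha.2.trans' h).trans' hb.1, fun h => (ha.1.trans' h).trans' hb.2⟩)
      le_refl := fun f => Quotient.inductionOn f fun f => Pre.refl A B f.1
      le_trans := fun f g h => Quotient.inductionOn₃ f g h
        (fun f g h h1 h2 => Pre.trans' h1 h2)
      le_antisymm := fun f g => Quotient.inductionOn₂ f g
        (fun f g h1 h2 => Quotient.sound ⟨h1, h2⟩) }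
  comp_mono {A B D} {f f'} {g g'} h h' := by
    revert h h'
    refine Quotient.inductionOn₂ f f' (fun a a' => Quotient.inductionOn₂ g g'
      (fun b b' h h' => ?_))
    exact Pre.compCongr b.2 h h'

end ExObj

/-! ## The canonical embedding `Γ : C → C_ex` -/

namespace ExObj

variable {C : Type u} [Category.{v} C] [PosEnriched C]

variable (I : C → C) (i0 i1 : ∀ X : C, I X ⟶ X)

/-- The pseudocongruence `(X, I_X)` associated to a chosen weak comma object `I_X` of
`(1_X, 1_X)`. -/
def commaExObj (hle : ∀ X, i0 X ≤ i1 X)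
    (hfac : ∀ (X : C) {A : C} (a0 a1 : A ⟶ X), a0 ≤ a1 →
      ∃ u : A ⟶ I X, u ≫ i0 X = a0 ∧ u ≫ i1 X = a1) (X : C) : ExObj C where
  X := X
  R := I X
  r0 := i0 X
  r1 := i1 X
  orefl a0 a1 h := hfac X a0 a1 h
  tra u v huv := by
    refine hfac X _ _ ?_
    calc u ≫ i0 X ≤ u ≫ i1 X := PosEnriched.comp_mono le_rfl (hle X)
      _ = v ≫ i0 X := huv
      _ ≤ v ≫ i1 X := PosEnriched.comp_mono le_rfl (hle X)

/-- The canonical functor `Γ : C → C_ex`, `X ↦ (X, I_X)`, `f ↦ [f]`. -/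
def GammaFunc (hle : ∀ X, i0 X ≤ i1 X)
    (hfac : ∀ (X : C) {A : C} (a0 a1 : A ⟶ X), a0 ≤ a1 →
      ∃ u : A ⟶ I X, u ≫ i0 X = a0 ∧ u ≫ i1 X = a1) : C ⥤ ExObj C where
  obj X := commaExObj I i0 i1 hle hfac X
  map {X Y} f := Quotient.mk _ ⟨f, by
    obtain ⟨u, h0, h1⟩ := hfac Y (i0 X ≫ f) (i1 X ≫ f)
      (PosEnriched.comp_mono (hle X) le_rfl)
    exact ⟨u, h0, h1⟩⟩
  map_id X := Quotient.sound (by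
    constructor <;> exact Pre.refl _ _ _)
  map_comp f g := Quotient.sound (by
    constructor <;> exact Pre.refl _ _ _)

/-- The canonical quotient morphism `[1_X] : Γ X → (X, R)` in `C_ex`. -/
def exQuot (hle : ∀ X, i0 X ≤ i1 X)
    (hfac : ∀ (X : C) {A : C} (a0 a1 : A ⟶ X), a0 ≤ a1 →
      ∃ u : A ⟶ I X, u ≫ i0 X = a0 ∧ u ≫ i1 X = a1) (A : ExObj C) :
    (GammaFunc I i0 i1 hle hfac).obj A.X ⟶ A :=
  Quotient.mk _ ⟨𝟙 A.X, by
    obtain ⟨u, h0, h1⟩ := A.orefl (i0 A.X) (i1 A.X) (hle A.X)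
    exact ⟨u, by simpa [GammaFunc, commaExObj] using h0, by simpa [GammaFunc, commaExObj] using h1⟩⟩

end ExObj

/-!
Order-reflexivity and transitivity of `(s₀, s₁)` are reduced to those of `(r₀, r₁)` in `C`.
Left covering compares `F` of the weak comma object of `(1_X, 1_X)` (resp. of the weak pullback
of `(r₁, r₀)`) with the genuine comma object (resp. pullback) in `E`, and the comparison is an
effective epimorphism, hence an so-morphism. The witness in `C`, mapped by `F` and followed by
`p`, descends along it by orthogonality of so-morphisms to the order-mono `⟨s₀, s₁⟩`. For
transitivity it must descend further along `FR ×_{FX} FR → S ×_{FX} S`, which is so because it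
is a composite of two pullbacks of `p`.
-/

open Limits

abbrev PosEnriched.ofThin (J : Type u') [Category.{v'} J] [Quiver.IsThin J] : PosEnriched J where
  homOrder _ _ :=
    { le := fun _ _ => True
      le_refl := fun _ => trivial
      le_trans := fun _ _ _ _ _ => trivial
      le_antisymm := fun f g _ _ => Subsingleton.elim f g }
  comp_mono _ _ := trivial

instance : PosEnriched WalkingCospan := PosEnriched.ofThin _

instance : PosEnriched (Discrete WalkingPair) := PosEnriched.ofThin _

def PosFunctor.ofThin {J : Type u'} {E : Type u} [Category.{v'} J] [Category.{v} E]
    [Quiver.IsThin J] [PosEnriched J] [PosEnriched E] (G : J ⥤ E) : PosFunctor J E where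
  toFunctor := G
  map_le {_ _ f g} _ := by rw [Subsingleton.elim f g]

def PosWeight.conical (J : Type u') [Category.{v'} J] [PosEnriched J] : PosWeight J where
  obj _ := PUnit
  po _ := inferInstance
  map _ _ := ⟨⟩
  map_monotone _ _ _ _ := le_rfl
  map_id _ _ := rfl
  map_comp _ _ _ := rfl
  map_le _ _ := le_rfl

theorem PosWeight.conical_isFiniteWeight (J : Type) [SmallCategory J] [FinCategory J]
    [PosEnriched J] : (PosWeight.conical J).IsFiniteWeight :=
  ⟨inferInstance, fun _ _ => inferInstance, fun _ => inferInstanceAs (Finite PUnit)⟩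

-- At the apex the weight is `false ≤ true`, so that a cylinder is a lax square.
def commaWeightObj : WalkingCospan → Type
  | WalkingCospan.one => Bool
  | some _ => PUnit

instance : ∀ j, PartialOrder (commaWeightObj j)
  | WalkingCospan.one => inferInstanceAs (PartialOrder Bool)
  | some _ => inferInstanceAs (PartialOrder PUnit)

def commaWeightMap :
    ∀ {j j' : WalkingCospan}, (j ⟶ j') → commaWeightObj j → commaWeightObj j'
  | _, _, WalkingCospan.Hom.id _ => id
  | _, _, WalkingCospan.Hom.inl => fun _ => false
  | _, _, WalkingCospan.Hom.inr => fun _ => true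

def PosWeight.comma : PosWeight WalkingCospan where
  obj := commaWeightObj
  po := inferInstance
  map := commaWeightMap
  map_monotone f x y h := by
    change WidePullbackShape.Hom _ _ at f
    cases f <;> first | exact h | exact le_rfl
  map_id _ _ := rfl
  map_comp f g x := by
    change WidePullbackShape.Hom _ _ at f g
    cases f <;> cases g <;> rfl
  map_le {_ _ f g} _ x := by rw [Subsingleton.elim f g]

theorem PosWeight.comma_isFiniteWeight : PosWeight.comma.IsFiniteWeight :=
  ⟨inferInstance, fun _ _ => inferInstance, fun j => by
    rcases j with _ | _
    · exact inferInstanceAs (Finite Bool)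
    · exact inferInstanceAs (Finite PUnit)⟩

section Cylinders

variable {E : Type u} [Category.{v} E] [PosEnriched E]

def Cylinder.ofCone {J : Type u'} [Category.{v'} J] [PosEnriched J] {H : PosFunctor J E}
    (s : Cone H.toFunctor) : Cylinder (PosWeight.conical J) H s.pt where
  app d _ := s.π.app d
  monotone _ _ _ _ := le_rfl
  naturality f _ := s.w f

theorem IsWeakWeightedLimitP.exists_lift_cone {J : Type u'} [Category.{v'} J] [PosEnriched J]
    {H : PosFunctor J E} {L : E} {c : Cylinder (PosWeight.conical J) H L}
    (hc : IsWeakWeightedLimitP (PosWeight.conical J) H L c) (s : Cone H.toFunctor) :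
    ∃ h : s.pt ⟶ L, ∀ d, h ≫ c.app d ⟨⟩ = s.π.app d := by
  obtain ⟨h, hh⟩ := hc s.pt (Cylinder.ofCone s)
  exact ⟨h, fun d => hh d ⟨⟩⟩

theorem Cylinder.comp_app_map_le {J : Type u'} [Category.{v'} J] [PosEnriched J]
    {W : PosWeight J} {H : PosFunctor J E} {L Z : E} (c : Cylinder W H L) {h h' : Z ⟶ L}
    {d d' : J} (f : d ⟶ d') (x : W.obj d) (hle : h ≫ c.app d x ≤ h' ≫ c.app d x) :
    h ≫ c.app d' (W.map f x) ≤ h' ≫ c.app d' (W.map f x) := by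
  rw [← c.naturality, ← Category.assoc, ← Category.assoc]
  exact comp_mono' hle le_rfl

open WalkingCospan in
theorem Cylinder.conical_cospan_comm {H : PosFunctor WalkingCospan E} {L : E}
    (c : Cylinder (PosWeight.conical WalkingCospan) H L) :
    c.app left ⟨⟩ ≫ H.toFunctor.map Hom.inl =
      c.app right ⟨⟩ ≫ H.toFunctor.map Hom.inr :=
  (c.naturality Hom.inl ⟨⟩).trans (c.naturality Hom.inr ⟨⟩).symm

open WalkingCospan in
theorem isPullbackP_of_isWeightedLimitP {H : PosFunctor WalkingCospan E} {L : E}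
    {c : Cylinder (PosWeight.conical WalkingCospan) H L}
    (hc : IsWeightedLimitP (PosWeight.conical WalkingCospan) H L c) :
    IsPullbackP (H.toFunctor.map Hom.inl) (H.toFunctor.map Hom.inr)
      (c.app left ⟨⟩) (c.app right ⟨⟩) := by
  refine ⟨c.conical_cospan_comm, fun u0 u1 hu => ?_, fun w w' h0 h1 => ?_⟩
  · obtain ⟨w, hw⟩ := hc.1.exists_lift_cone
      ((Cone.postcompose (diagramIsoCospan H.toFunctor).inv).obj (PullbackCone.mk u0 u1 hu))
    exact ⟨w, (hw left).trans (Category.comp_id u0), (hw right).trans (Category.comp_id u1)⟩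
  · refine hc.2 _ w w' fun d x => ?_
    rcases d with _ | _ | _
    · exact c.comp_app_map_le Hom.inl ⟨⟩ h0
    · exact h0
    · exact h1

theorem isBinProdP_of_isWeightedLimitP {X Y L : E}
    {c : Cylinder (PosWeight.conical _) (PosFunctor.ofThin (pair X Y)) L}
    (hc : IsWeightedLimitP (PosWeight.conical _) (PosFunctor.ofThin (pair X Y)) L c) :
    IsBinProdP (X := X) (Y := Y) (c.app ⟨.left⟩ ⟨⟩) (c.app ⟨.right⟩ ⟨⟩) := by
  refine ⟨fun f g => ?_, fun h h' hl hr => hc.2 _ h h' fun ⟨d⟩ x => ?_⟩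
  · obtain ⟨w, hw⟩ := hc.1.exists_lift_cone (BinaryFan.mk f g)
    exact ⟨w, hw ⟨.left⟩, hw ⟨.right⟩⟩
  · cases d
    · exact hl
    · exact hr

open WalkingCospan in
def Cylinder.ofLaxSquare (H : PosFunctor WalkingCospan E) {L : E}
    (u : L ⟶ H.toFunctor.obj left) (v : L ⟶ H.toFunctor.obj right)
    (huv : u ≫ H.toFunctor.map Hom.inl ≤ v ≫ H.toFunctor.map Hom.inr) :
    Cylinder PosWeight.comma H L where
  app
    | left, _ => u
    | right, _ => v
    | one, b => bif b then v ≫ H.toFunctor.map Hom.inr else u ≫ H.toFunctor.map Hom.inl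
  monotone
    | left, _, _, _ => le_rfl
    | right, _, _, _ => le_rfl
    | one, false, false, _ => le_rfl
    | one, true, true, _ => le_rfl
    | one, false, true, _ => huv
    | one, true, false, h => absurd h (by decide : ¬(true : Bool) ≤ false)
  naturality f _ := by
    change WidePullbackShape.Hom _ _ at f
    rcases f with _ | ⟨_ | _⟩
    · exact (congrArg _ (H.toFunctor.map_id _)).trans (Category.comp_id _)
    all_goals rfl

open WalkingCospan in
theorem Cylinder.comma_lax {H : PosFunctor WalkingCospan E} {L : E}
    (c : Cylinder PosWeight.comma H L) :
    c.app left ⟨⟩ ≫ H.toFunctor.map Hom.inl ≤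
      c.app right ⟨⟩ ≫ H.toFunctor.map Hom.inr :=
  (c.naturality Hom.inl ⟨⟩).trans_le
    ((c.monotone one false true (Bool.false_le true)).trans_eq (c.naturality Hom.inr ⟨⟩).symm)

open WalkingCospan in
theorem isCommaP_of_isWeightedLimitP {H : PosFunctor WalkingCospan E} {L : E}
    {c : Cylinder PosWeight.comma H L} (hc : IsWeightedLimitP PosWeight.comma H L c) :
    IsCommaP (H.toFunctor.map Hom.inl) (H.toFunctor.map Hom.inr)
      (c.app left ⟨⟩) (c.app right ⟨⟩) := by
  refine ⟨c.comma_lax, fun u0 u1 hu => ?_, fun w w' h0 h1 => ?_⟩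
  · obtain ⟨w, hw⟩ := hc.1 _ (Cylinder.ofLaxSquare H u0 u1 hu)
    exact ⟨w, hw left ⟨⟩, hw right ⟨⟩⟩
  · refine hc.2 _ w w' fun d x => ?_
    rcases d with _ | _ | _
    · cases x
      · exact c.comp_app_map_le Hom.inl ⟨⟩ h0
      · exact c.comp_app_map_le Hom.inr ⟨⟩ h1
    · exact h0
    · exact h1

end Cylinders

namespace PosEnr

variable {C : Type u} [Category.{v} C] [PosEnriched C]

def JointlyOrderMono {S X Y : C} (s0 : S ⟶ X) (s1 : S ⟶ Y) : Prop :=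
  ∀ {Z : C} (u v : Z ⟶ S), u ≫ s0 ≤ v ≫ s0 → u ≫ s1 ≤ v ≫ s1 → u ≤ v

theorem IsCoinserterP.hom_ext {X Y Q Z : C} {x y : X ⟶ Y} {q : Y ⟶ Q}
    (hq : IsCoinserterP x y q) {h h' : Q ⟶ Z} (e : q ≫ h = q ≫ h') : h = h' :=
  le_antisymm (hq.2.2 h h' e.le) (hq.2.2 h' h e.ge)

theorem IsCoinserterP.isSo {X Y Q : C} {x y : X ⟶ Y} {q : Y ⟶ Q}
    (hq : IsCoinserterP x y q) : IsSo q := by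
  intro X' Y' m hm
  refine ⟨fun f g hfg => ?_, fun h h' hh _ => hq.2.2 h h' hh⟩
  have hxy : x ≫ f ≤ y ≫ f := hm _ _ <| by
    simpa only [Category.assoc, hfg] using comp_mono' hq.1 (le_refl g)
  obtain ⟨h, hh⟩ := hq.2.1 f hxy
  exact ⟨h, hh, hq.hom_ext (by rw [← Category.assoc, hh, hfg])⟩

theorem EffectiveEpiP.isSo {Y Q : C} {q : Y ⟶ Q} (hq : EffectiveEpiP q) : IsSo q :=
  let ⟨_, _, _, h⟩ := hq
  h.isSo

theorem IsSo.comp {A B D : C} {e1 : A ⟶ B} {e2 : B ⟶ D} (h1 : IsSo e1) (h2 : IsSo e2) :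
    IsSo (e1 ≫ e2) := by
  intro X Y m hm
  obtain ⟨lift1, le1⟩ := h1 m hm
  obtain ⟨lift2, le2⟩ := h2 m hm
  refine ⟨fun f g hfg => ?_, fun h h' hh hm' => le2 h h' (le1 _ _ ?_ ?_) hm'⟩
  · obtain ⟨t1, ht1, ht1'⟩ := lift1 f (e2 ≫ g) (by rw [hfg, Category.assoc])
    obtain ⟨t2, ht2, ht2'⟩ := lift2 t1 g ht1'
    exact ⟨t2, by rw [Category.assoc, ht2, ht1], ht2'⟩
  · simpa only [Category.assoc] using hh
  · simpa only [Category.assoc] using comp_mono' (le_refl e2) hm'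

theorem IsBinProdP.hom_ext {X Y P Z : C} {π0 : P ⟶ X} {π1 : P ⟶ Y} (hP : IsBinProdP π0 π1)
    {h h' : Z ⟶ P} (e0 : h ≫ π0 = h' ≫ π0) (e1 : h ≫ π1 = h' ≫ π1) : h = h' :=
  le_antisymm (hP.2 h h' e0.le e1.le) (hP.2 h' h e0.ge e1.ge)

theorem JointlyOrderMono.orderMono_of_comp {X Y P S : C} {s0 : S ⟶ X} {s1 : S ⟶ Y}
    (hs : JointlyOrderMono s0 s1) {σ : S ⟶ P} {π0 : P ⟶ X} {π1 : P ⟶ Y}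
    (hσ0 : σ ≫ π0 = s0) (hσ1 : σ ≫ π1 = s1) : OrderMono σ := by
  intro Z u v huv
  refine hs u v ?_ ?_
  · simpa only [← hσ0, ← Category.assoc] using comp_mono' huv (le_refl π0)
  · simpa only [← hσ1, ← Category.assoc] using comp_mono' huv (le_refl π1)

theorem IsSo.exists_lift_of_jointlyOrderMono {A B S X Y P : C} {e : A ⟶ B} (he : IsSo e)
    {π0 : P ⟶ X} {π1 : P ⟶ Y} (hP : IsBinProdP π0 π1)
    {s0 : S ⟶ X} {s1 : S ⟶ Y} (hs : JointlyOrderMono s0 s1)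
    (f : A ⟶ S) (g0 : B ⟶ X) (g1 : B ⟶ Y) (h0 : f ≫ s0 = e ≫ g0)
    (h1 : f ≫ s1 = e ≫ g1) :
    ∃ h : B ⟶ S, e ≫ h = f ∧ h ≫ s0 = g0 ∧ h ≫ s1 = g1 := by
  obtain ⟨σ, hσ0, hσ1⟩ := hP.1 s0 s1
  obtain ⟨τ, hτ0, hτ1⟩ := hP.1 g0 g1
  have hsq : f ≫ σ = e ≫ τ := hP.hom_ext
    (by rw [Category.assoc, Category.assoc, hσ0, hτ0, h0])
    (by rw [Category.assoc, Category.assoc, hσ1, hτ1, h1])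
  obtain ⟨h, hef, hhσ⟩ := (he σ (hs.orderMono_of_comp hσ0 hσ1)).1 f τ hsq
  exact ⟨h, hef, by rw [← hσ0, ← Category.assoc, hhσ, hτ0],
    by rw [← hσ1, ← Category.assoc, hhσ, hτ1]⟩

theorem IsPullbackP.flip {X Y Z P : C} {f : X ⟶ Z} {g : Y ⟶ Z} {p0 : P ⟶ X} {p1 : P ⟶ Y}
    (h : IsPullbackP f g p0 p1) : IsPullbackP g f p1 p0 := by
  refine ⟨h.1.symm, fun u1 u0 hu => ?_, fun w w' h1 h0 => h.2.2 w w' h0 h1⟩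
  obtain ⟨w, hw0, hw1⟩ := h.2.1 u0 u1 hu.symm
  exact ⟨w, hw1, hw0⟩

theorem IsPullbackP.hom_ext {X Y Z P A : C} {f : X ⟶ Z} {g : Y ⟶ Z} {p0 : P ⟶ X}
    {p1 : P ⟶ Y} (h : IsPullbackP f g p0 p1) {w w' : A ⟶ P} (e0 : w ≫ p0 = w' ≫ p0)
    (e1 : w ≫ p1 = w' ≫ p1) : w = w' :=
  le_antisymm (h.2.2 w w' e0.le e1.le) (h.2.2 w' w e0.ge e1.ge)

theorem IsPullbackP.of_comp {A S X Y Q R : C} {f : S ⟶ X} {g : Y ⟶ X} {q0 : Q ⟶ S}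
    {q1 : Q ⟶ Y} (hq : IsPullbackP f g q0 q1) {e : A ⟶ S} {f' : A ⟶ X} {r0 : R ⟶ A}
    {r1 : R ⟶ Y} (hr : IsPullbackP f' g r0 r1) (hf' : e ≫ f = f') {k : R ⟶ Q}
    (hk0 : k ≫ q0 = r0 ≫ e) (hk1 : k ≫ q1 = r1) : IsPullbackP e q0 r0 k := by
  refine ⟨hk0.symm, fun a b hab => ?_, fun w w' h0 hk => hr.2.2 w w' h0 ?_⟩
  · obtain ⟨w, hw0, hw1⟩ := hr.2.1 a (b ≫ q1) <| by
      rw [← hf', ← Category.assoc, hab, Category.assoc, hq.1, Category.assoc]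
    refine ⟨w, hw0, hq.hom_ext ?_ ?_⟩
    · rw [Category.assoc, hk0, ← Category.assoc, hw0, hab]
    · rw [Category.assoc, hk1, hw1]
  · simpa only [Category.assoc, hk1] using comp_mono' hk (le_refl q1)

end PosEnr

section Limits

variable {C : Type u} {E : Type u'} [Category.{v} C] [Category.{v'} E]
  [PosEnriched C] [PosEnriched E]

theorem HasFiniteWeightedLimitsP.exists_isPullbackP (hE : HasFiniteWeightedLimitsP E)
    {X Y Z : E} (f : X ⟶ Z) (g : Y ⟶ Z) :
    ∃ (P : E) (p0 : P ⟶ X) (p1 : P ⟶ Y), IsPullbackP f g p0 p1 := by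
  obtain ⟨L, c, hc⟩ := hE _ _ (PosFunctor.ofThin (cospan f g))
    (PosWeight.conical_isFiniteWeight _)
  exact ⟨L, _, _, isPullbackP_of_isWeightedLimitP hc⟩

theorem HasFiniteWeightedLimitsP.exists_isBinProdP (hE : HasFiniteWeightedLimitsP E)
    (X Y : E) : ∃ (P : E) (p : P ⟶ X) (q : P ⟶ Y), IsBinProdP p q := by
  obtain ⟨L, c, hc⟩ := hE _ _ (PosFunctor.ofThin (pair X Y))
    (PosWeight.conical_isFiniteWeight _)
  exact ⟨L, _, _, isBinProdP_of_isWeightedLimitP hc⟩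

theorem IsRegularCat.exists_isSo_pullback_map (hE : IsRegularCat E) {A S X P P' : E}
    {p : A ⟶ S} (hp : IsSo p) {s0 s1 : S ⟶ X} {π0 π1 : P ⟶ S}
    (hP : IsPullbackP s1 s0 π0 π1)
    {ρ0 ρ1 : P' ⟶ A} (hP' : IsPullbackP (p ≫ s1) (p ≫ s0) ρ0 ρ1) :
    ∃ k : P' ⟶ P, k ≫ π0 = ρ0 ≫ p ∧ k ≫ π1 = ρ1 ≫ p ∧ IsSo k := by
  obtain ⟨hlim, -, hstab⟩ := hE
  obtain ⟨Q, κ0, κ1, hQ⟩ := hlim.exists_isPullbackP (p ≫ s1) s0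
  obtain ⟨k0, hk00, hk01⟩ := hP.2.1 (κ0 ≫ p) κ1 (by rw [Category.assoc]; exact hQ.1)
  obtain ⟨k1, hk10, hk11⟩ := hQ.2.1 ρ0 (ρ1 ≫ p) (by rw [Category.assoc]; exact hP'.1)
  have hk0 : IsSo k0 := hstab _ _ _ _ (hP.of_comp hQ rfl hk00 hk01) hp
  have hk1 : IsSo k1 := hstab _ _ _ _ (hQ.flip.of_comp hP'.flip rfl hk11 hk10) hp
  exact ⟨k1 ≫ k0, by rw [Category.assoc, hk00, reassoc_of% hk10],
    by rw [Category.assoc, hk01, hk11], IsSo.comp hk1 hk0⟩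

theorem LeftCovering.exists_effectiveEpiP_comparison {F : PosFunctor C E}
    (hF : LeftCovering F) {D : Type} [SmallCategory D] [PosEnriched D] {W : PosWeight D}
    (hW : W.IsFiniteWeight) {G : PosFunctor D C} {L : C} {c : Cylinder W G L}
    (hc : IsWeakWeightedLimitP W G L c) {L' : E} {c' : Cylinder W (G.comp F) L'}
    (hc' : IsWeightedLimitP W (G.comp F) L' c') :
    ∃ e : F.toFunctor.obj L ⟶ L',
      (∀ d x, e ≫ c'.app d x = F.toFunctor.map (c.app d x)) ∧ EffectiveEpiP e := by
  obtain ⟨e, he⟩ := hc'.1 _ (c.mapF F)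
  exact ⟨e, he, hF D W hW G L c hc L' c' hc' e he⟩

open WalkingCospan in
theorem LeftCovering.exists_cover_comma (hC : WeaklyLex C) (hE : HasFiniteWeightedLimitsP E)
    {F : PosFunctor C E} (hF : LeftCovering F) {X Y Z : C} (f : X ⟶ Z) (g : Y ⟶ Z) :
    ∃ (W : C) (w0 : W ⟶ X) (w1 : W ⟶ Y) (P : E) (c0 : P ⟶ F.toFunctor.obj X)
      (c1 : P ⟶ F.toFunctor.obj Y) (e : F.toFunctor.obj W ⟶ P),
      w0 ≫ f ≤ w1 ≫ g ∧ IsCommaP (F.toFunctor.map f) (F.toFunctor.map g) c0 c1 ∧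
      e ≫ c0 = F.toFunctor.map w0 ∧ e ≫ c1 = F.toFunctor.map w1 ∧ EffectiveEpiP e := by
  let G := PosFunctor.ofThin (cospan f g)
  obtain ⟨W, c, hc⟩ := hC _ _ G PosWeight.comma_isFiniteWeight
  obtain ⟨P, c', hc'⟩ := hE _ _ (G.comp F) PosWeight.comma_isFiniteWeight
  obtain ⟨e, he, hcov⟩ :=
    hF.exists_effectiveEpiP_comparison PosWeight.comma_isFiniteWeight hc hc'
  exact ⟨W, _, _, P, _, _, e, c.comma_lax, isCommaP_of_isWeightedLimitP hc', he left ⟨⟩,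
    he right ⟨⟩, hcov⟩

open WalkingCospan in
theorem LeftCovering.exists_cover_pullback (hC : WeaklyLex C)
    (hE : HasFiniteWeightedLimitsP E) {F : PosFunctor C E} (hF : LeftCovering F) {X Y Z : C}
    (f : X ⟶ Z) (g : Y ⟶ Z) :
    ∃ (W : C) (w0 : W ⟶ X) (w1 : W ⟶ Y) (P : E) (p0 : P ⟶ F.toFunctor.obj X)
      (p1 : P ⟶ F.toFunctor.obj Y) (e : F.toFunctor.obj W ⟶ P),
      w0 ≫ f = w1 ≫ g ∧ IsPullbackP (F.toFunctor.map f) (F.toFunctor.map g) p0 p1 ∧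
      e ≫ p0 = F.toFunctor.map w0 ∧ e ≫ p1 = F.toFunctor.map w1 ∧ EffectiveEpiP e := by
  let G := PosFunctor.ofThin (cospan f g)
  have hW := PosWeight.conical_isFiniteWeight WalkingCospan
  obtain ⟨W, c, hc⟩ := hC _ _ G hW
  obtain ⟨P, c', hc'⟩ := hE _ _ (G.comp F) hW
  obtain ⟨e, he, hcov⟩ := hF.exists_effectiveEpiP_comparison hW hc hc'
  exact ⟨W, _, _, P, _, _, e, c.conical_cospan_comm, isPullbackP_of_isWeightedLimitP hc',
    he left ⟨⟩, he right ⟨⟩, hcov⟩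

end Limits

section Image

variable {C : Type u} {E : Type u'} [Category.{v} C] [Category.{v'} E]
  [PosEnriched C] [PosEnriched E] {F : PosFunctor C E} (A : ExObj C) {S : E}
  {p : F.toFunctor.obj A.R ⟶ S} {s0 s1 : S ⟶ F.toFunctor.obj A.X}

theorem LeftCovering.image_orefl (hC : WeaklyLex C) (hE : HasFiniteWeightedLimitsP E)
    (hF : LeftCovering F) (hs : JointlyOrderMono s0 s1)
    (h0 : p ≫ s0 = F.toFunctor.map A.r0) (h1 : p ≫ s1 = F.toFunctor.map A.r1)
    {Z : E} (a0 a1 : Z ⟶ F.toFunctor.obj A.X) (ha : a0 ≤ a1) :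
    ∃ u : Z ⟶ S, u ≫ s0 = a0 ∧ u ≫ s1 = a1 := by
  obtain ⟨W, i0, i1, I, c0, c1, e, hi, hI, he0, he1, he⟩ :=
    hF.exists_cover_comma hC hE (𝟙 A.X) (𝟙 A.X)
  simp only [Category.comp_id] at hi
  simp only [F.toFunctor.map_id] at hI
  obtain ⟨r, hr0, hr1⟩ := A.orefl i0 i1 hi
  obtain ⟨P, π0, π1, hP⟩ := hE.exists_isBinProdP (F.toFunctor.obj A.X) (F.toFunctor.obj A.X)
  obtain ⟨m, -, hm0, hm1⟩ := IsSo.exists_lift_of_jointlyOrderMono he.isSo hP hs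
    (F.toFunctor.map r ≫ p) c0 c1
    (by rw [Category.assoc, h0, ← F.toFunctor.map_comp, hr0, he0])
    (by rw [Category.assoc, h1, ← F.toFunctor.map_comp, hr1, he1])
  obtain ⟨w, hw0, hw1⟩ := hI.2.1 a0 a1 (by simpa only [Category.comp_id] using ha)
  exact ⟨w ≫ m, by rw [Category.assoc, hm0, hw0], by rw [Category.assoc, hm1, hw1]⟩

theorem LeftCovering.image_tra (hC : WeaklyLex C) (hE : IsRegularCat E)
    (hF : LeftCovering F) (hp : IsSo p) (hs : JointlyOrderMono s0 s1)
    (h0 : p ≫ s0 = F.toFunctor.map A.r0) (h1 : p ≫ s1 = F.toFunctor.map A.r1)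
    {Z : E} (u v : Z ⟶ S) (huv : u ≫ s1 = v ≫ s0) :
    ∃ t : Z ⟶ S, t ≫ s0 = u ≫ s0 ∧ t ≫ s1 = v ≫ s1 := by
  obtain ⟨W, w0, w1, P2, ρ0, ρ1, e, hw, hP2, he0, he1, he⟩ :=
    hF.exists_cover_pullback hC hE.1 A.r1 A.r0
  rw [← h0, ← h1] at hP2
  obtain ⟨P, π0, π1, hP⟩ := hE.1.exists_isPullbackP s1 s0
  obtain ⟨k, hk0, hk1, hk⟩ := hE.exists_isSo_pullback_map hp hP hP2
  obtain ⟨t, ht0, ht1⟩ := A.tra w0 w1 hw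
  obtain ⟨Q, q0, q1, hQ⟩ := hE.1.exists_isBinProdP (F.toFunctor.obj A.X) (F.toFunctor.obj A.X)
  obtain ⟨m, -, hm0, hm1⟩ := IsSo.exists_lift_of_jointlyOrderMono (IsSo.comp he.isSo hk) hQ hs
    (F.toFunctor.map t ≫ p) (π0 ≫ s0) (π1 ≫ s1)
    (by
      rw [Category.assoc, h0, ← F.toFunctor.map_comp, ht0, F.toFunctor.map_comp, ← h0]
      simp only [Category.assoc, reassoc_of% hk0, reassoc_of% he0])
    (by
      rw [Category.assoc, h1, ← F.toFunctor.map_comp, ht1, F.toFunctor.map_comp, ← h1]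
      simp only [Category.assoc, reassoc_of% hk1, reassoc_of% he1])
  obtain ⟨w, hw0, hw1⟩ := hP.2.1 u v huv
  exact ⟨w ≫ m, by rw [Category.assoc, hm0, ← Category.assoc, hw0],
    by rw [Category.assoc, hm1, ← Category.assoc, hw1]⟩

end Image

/-- the (so, ff)-image in a regular category of a pseudocongruence under a
left covering functor is a congruence. -/
theorem statement14 {C : Type u} {E : Type u'} [Category.{v} C] [Category.{v'} E]
    [PosEnriched C] [PosEnriched E] (hC : WeaklyLex C) (hE : IsRegularCat E)
    (F : PosFunctor C E) (hF : LeftCovering F)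
    (A : ExObj C) (S : E) (p : F.toFunctor.obj A.R ⟶ S)
    (s0 s1 : S ⟶ F.toFunctor.obj A.X)
    (hp : PosEnr.IsSo p)
    (hmono : ∀ {Z : E} (u v : Z ⟶ S), u ≫ s0 ≤ v ≫ s0 → u ≫ s1 ≤ v ≫ s1 → u ≤ v)
    (h0 : p ≫ s0 = F.toFunctor.map A.r0) (h1 : p ≫ s1 = F.toFunctor.map A.r1) :
    PosEnr.IsCongPair s0 s1 :=
  ⟨hmono, hF.image_orefl A hC hE.1 hmono h0 h1, hF.image_tra A hC hE hp hmono h0 h1⟩
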